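/- arXiv:2108.13631 — 3 statements merged into one kernel-verified Lean document; each statement's English description precedes it below -/
import Mathlib

section
/- For every natural number $n$, the identity of polynomials $W_n(2x-1) = \sum_{k=0}^{n} \Big( (-1)^{k}\, \frac{2^{2n-k}}{\binom{2n}{n}\,(n-k)!} \sum_{v=0}^{k} \sum_{l=0}^{v} 2^{l}\, \frac{(1+n)_{n-l}\,(-\tfrac{1}{2}-n)_{l}}{(k-v)!\,(v-l)!\, l!} \Big) x^{n-k}$ holds in $\mathbb{R}[x]$. -/
open Polynomial Finset

/-- The Jacobi polynomial `P_n^{(a,b)}`, defined by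
`P_n^{(a,b)}(z) = ∑_{l=0}^n (n+a+b+1)_l (a+l+1)_{n-l} / (l! (n-l)!) ((z-1)/2)^l`. -/
noncomputable def jacobiP (a b : ℝ) (n : ℕ) : ℝ[X] :=
  ∑ l ∈ range (n + 1),
    C (((ascPochhammer ℝ l).eval ((n : ℝ) + a + b + 1) *
        (ascPochhammer ℝ (n - l)).eval (a + l + 1)) /
       (l.factorial * (n - l).factorial)) * (C (1 / 2) * (X - 1)) ^ l

/-- The Chebyshev polynomial of the third kind, `V_n(x) = 2^{2n}/C(2n,n) ⬝ P_n^{(-1/2,1/2)}(x)`. -/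
noncomputable def chebV (n : ℕ) : ℝ[X] :=
  C ((2 : ℝ) ^ (2 * n) / ((2 * n).choose n : ℝ)) * jacobiP (-(1 / 2)) (1 / 2) n

/-- The Chebyshev polynomial of the fourth kind, `W_n(x) = 2^{2n}/C(2n,n) ⬝ P_n^{(1/2,-1/2)}(x)`. -/
noncomputable def chebW (n : ℕ) : ℝ[X] :=
  C ((2 : ℝ) ^ (2 * n) / ((2 * n).choose n : ℝ)) * jacobiP (1 / 2) (-(1 / 2)) n

/-!
The substitution `z = 2x - 1` turns `((z - 1)/2)^l` into `(x - 1)^l`, so the binomial expansion of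
`(x - 1)^j` gives the coefficient of `x^d` in `W_n(2x - 1)` as an alternating sum over `j ≥ d`.
On the other side the inner sum over `v` collapses, because
`∑_{v=l}^{k} 1/((k-v)! (v-l)!) = 2^{k-l}/(k-l)!`. After reindexing `j = n - l`, the two sums agree
term by term thanks to the reflection `(-1/2 - n)_l = (-1)^l (n - l + 3/2)_l` of the Pochhammer
symbol.
-/

open Nat

section FactorialSums

variable {K : Type*} [Field K] [CharZero K]

theorem sum_range_inv_factorial_mul_inv_factorial (m : ℕ) :
    ∑ i ∈ range (m + 1), (1 : K) / (i ! * (m - i)!) = 2 ^ m / m ! := by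
  have hterm : ∀ i ∈ range (m + 1), (1 : K) / (i ! * (m - i)!) = m.choose i / m ! := by
    intro i hi
    rw [cast_choose K (Nat.lt_succ_iff.mp (mem_range.mp hi)),
      div_div_cancel_left' (by exact_mod_cast m.factorial_ne_zero), one_div]
  rw [sum_congr rfl hterm, ← sum_div]
  exact_mod_cast congrArg (fun x : ℕ => (x : K) / m !) (sum_range_choose m)

theorem sum_range_sum_range_div_factorial (k : ℕ) (g : ℕ → K) :
    ∑ v ∈ range (k + 1), ∑ l ∈ range (v + 1), g l / ((k - v)! * (v - l)! * l !) =
      ∑ l ∈ range (k + 1), 2 ^ (k - l) * g l / ((k - l)! * l !) := by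
  rw [sum_comm' (t' := range (k + 1)) (s' := fun l => Ico l (k + 1))
    (by intro v l; simp only [mem_range, mem_Ico]; omega)]
  refine sum_congr rfl fun l hl => ?_
  have hlk : l ≤ k := Nat.lt_succ_iff.mp (mem_range.mp hl)
  rw [sum_Ico_eq_sum_range, show k + 1 - l = (k - l) + 1 by omega]
  have hterm : ∀ i ∈ range (k - l + 1), g l / ((k - (l + i))! * (l + i - l)! * l !) =
      g l / l ! * (1 / (i ! * (k - l - i)!)) := by
    intro i _
    rw [show k - (l + i) = k - l - i by omega, Nat.add_sub_cancel_left]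
    field_simp
  rw [sum_congr rfl hterm, ← mul_sum, sum_range_inv_factorial_mul_inv_factorial]
  field_simp

end FactorialSums

theorem sum_range_mul_choose_eq_sum_range_reflect {R : Type*} [CommSemiring R] (f : ℕ → R)
    {n d : ℕ} (hd : d ≤ n) :
    ∑ j ∈ range (n + 1), f j * j.choose d =
      ∑ l ∈ range (n - d + 1), f (n - l) * (n - l).choose d := by
  rw [← sum_range_reflect,
    ← sum_subset (range_subset_range.mpr (by omega : n - d + 1 ≤ n + 1))]
  · simp only [add_tsub_cancel_right]
  · intro l hl hl'
    simp only [mem_range] at hl hl'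
    rw [add_tsub_cancel_right, Nat.choose_eq_zero_of_lt (by omega), Nat.cast_zero, mul_zero]

theorem coeff_sum_C_mul_X_sub_one_pow {R : Type*} [CommRing R] (s : Finset ℕ) (f : ℕ → R)
    (d : ℕ) :
    (∑ j ∈ s, C (f j) * (X - 1) ^ j).coeff d =
      ∑ j ∈ s, f j * (-1) ^ (j - d) * j.choose d := by
  simp only [finsetSum_coeff, coeff_C_mul, sub_eq_add_neg, ← C_1, ← C_neg, coeff_X_add_C_pow,
    mul_assoc]

theorem coeff_sum_C_mul_X_pow_sub {R : Type*} [Semiring R] (n : ℕ) (g : ℕ → R) (d : ℕ) :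
    (∑ k ∈ range (n + 1), C (g k) * X ^ (n - k)).coeff d =
      if d ≤ n then g (n - d) else 0 := by
  simp only [finsetSum_coeff, coeff_C_mul_X_pow]
  split_ifs with hd
  · rw [sum_eq_single_of_mem (n - d) (mem_range.mpr (by omega))
      fun k hk _ => if_neg (by rw [mem_range] at hk; omega)]
    exact if_pos (by omega)
  · exact sum_eq_zero fun k hk => if_neg (by rw [mem_range] at hk; omega)

theorem neg_one_pow_sub {R : Type*} [Monoid R] [HasDistribNeg R] {k l : ℕ} (hl : l ≤ k) :
    (-1 : R) ^ (k - l) = (-1) ^ k * (-1) ^ l := by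
  rw [← pow_add, show k + l = k - l + 2 * l by omega, pow_add, pow_mul, neg_one_sq, one_pow,
    mul_one]

theorem ascPochhammer_eval_neg_sub_natCast {R : Type*} [CommRing R] (r : R) {l n : ℕ}
    (hl : l ≤ n) :
    (ascPochhammer R l).eval (-r - n) =
      (-1) ^ l * (ascPochhammer R l).eval (r + (n - l : ℕ) + 1) := by
  rw [← neg_add', ascPochhammer_eval_neg_eq_descPochhammer, descPochhammer_eval_eq_ascPochhammer,
    Nat.cast_sub hl, add_sub_assoc]

theorem jacobiP_comp_two_mul_X_sub_one (a b : ℝ) (n : ℕ) :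
    (jacobiP a b n).comp (2 * X - 1) =
      ∑ l ∈ range (n + 1),
        C (((ascPochhammer ℝ l).eval ((n : ℝ) + a + b + 1) *
            (ascPochhammer ℝ (n - l)).eval (a + l + 1)) / (l ! * (n - l)!)) * (X - 1) ^ l := by
  have hshift : C (1 / 2 : ℝ) * (2 * X - 1 - 1) = X - 1 := by
    rw [show (2 * X - 1 - 1 : ℝ[X]) = C 2 * (X - 1) by rw [C_ofNat]; ring, ← mul_assoc,
      ← C_mul]
    norm_num
  simp only [jacobiP, Polynomial.sum_comp, mul_comp, C_comp, pow_comp, sub_comp, X_comp, one_comp,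
    hshift]

theorem shifted_chebW_in_monomials (n : ℕ) :
    (chebW n).comp (2 * X - 1) =
      ∑ k ∈ range (n + 1),
        C ((-1 : ℝ) ^ k * (2 : ℝ) ^ (2 * n - k) / (((2 * n).choose n : ℝ) * (n - k).factorial) *
           ∑ v ∈ range (k + 1), ∑ l ∈ range (v + 1),
             2 ^ l * ((ascPochhammer ℝ (n - l)).eval (1 + (n : ℝ)) *
                      (ascPochhammer ℝ l).eval (-(1 / 2) - (n : ℝ))) /
             ((k - v).factorial * (v - l).factorial * l.factorial)) * X ^ (n - k) := by
  ext d
  rw [chebW, mul_comp, C_comp, coeff_C_mul, jacobiP_comp_two_mul_X_sub_one,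
    coeff_sum_C_mul_X_sub_one_pow, coeff_sum_C_mul_X_pow_sub]
  split_ifs with hd
  · obtain ⟨k, hk, rfl⟩ : ∃ k ≤ n, d = n - k := ⟨n - d, by omega, by omega⟩
    rw [Nat.sub_sub_self hk, sum_range_sum_range_div_factorial,
      sum_range_mul_choose_eq_sum_range_reflect _ (Nat.sub_le n k), Nat.sub_sub_self hk, mul_sum,
      mul_sum]
    refine sum_congr rfl fun l hl => ?_
    have hlk : l ≤ k := Nat.lt_succ_iff.mp (mem_range.mp hl)
    have hchoose : ((n - l).choose (n - k) : ℝ) = (n - l)! / ((n - k)! * (k - l)!) := by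
      rw [Nat.cast_choose ℝ (by omega), show n - l - (n - k) = k - l by omega]
    have hpow : (2 : ℝ) ^ (2 * n) = 2 ^ (2 * n - k) * 2 ^ (k - l) * 2 ^ l := by
      rw [← pow_add, ← pow_add]; congr 1; omega
    rw [show (n : ℝ) + 1 / 2 + -(1 / 2) + 1 = 1 + n by ring, show n - (n - l) = l by omega,
      show n - l - (n - k) = k - l by omega, ascPochhammer_eval_neg_sub_natCast _ (hlk.trans hk),
      hchoose, neg_one_pow_sub hlk, hpow]
    field_simp
  · refine mul_eq_zero_of_right _ (sum_eq_zero fun j hj => ?_)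
    rw [Nat.choose_eq_zero_of_lt (by rw [mem_range] at hj; omega), Nat.cast_zero, mul_zero]
end

section
/- For every natural number $n$, the identity of polynomials $x^n = \sum_{k=0}^{n} \Big( 2^{-n}\, n! \sum_{v=0}^{k} \sum_{l=0}^{k-v} \frac{(-1)^{l}\,(2(n-v-l)+1)!!}{(k-v-l)!\,(2n-v-l-k+1)!\; v!\; l!} \Big) V_{n-k}(2x-1)$ holds in $\mathbb{R}[x]$. -/
open Polynomial Finset

/-!
In the variable `y = X - 1` the shifted polynomial is `V_m(2X - 1) = ∑_l 4^l C(m+l, 2l) y^l`.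
Grouping the double sum of the coefficient by `j = v + l`, the inner alternating sums
`∑_{v+l=j} (-1)^l / (v! l!) = (1 - 1)^j / j!` vanish for `j > 0`, so the coefficient is
`C(2n+1, k) / 4^n`. Comparing coefficients of `y^l` with `X^n = (1 + y)^n` leaves
`∑_k C(2n+1, k) C(n-k+l, 2l) = 4^(n-l) C(n, l)`. The left side is the coefficient of `X^(n-l)` in
`(1 + X)^(2n+1) / (1 - X)^(2l+1)`, and `(1 + X)^2 = (1 - X)^2 + 4X` turns it into a Pascal-type
recurrence in `l` and `n - l`.
-/

open scoped Nat

theorem ascPochhammer_eval_natCast_add_one {K : Type*} [Field K] [CharZero K] (a l : ℕ) :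
    (ascPochhammer K l).eval ((a : K) + 1) = (a + l)! / a ! := by
  rw [eq_div_iff (Nat.cast_ne_zero.2 a.factorial_ne_zero), ← Nat.cast_succ,
    ascPochhammer_nat_eq_natCast_ascFactorial, ← Nat.cast_mul, mul_comm,
    Nat.factorial_mul_ascFactorial]

theorem ascPochhammer_eval_natCast_add_half {K : Type*} [Field K] [CharZero K] (l m : ℕ) :
    (ascPochhammer K m).eval ((l : K) + 1 / 2) =
      (2 * (l + m))! * l ! / ((2 * l)! * (l + m)! * 4 ^ m) := by
  induction m with
  | zero =>
    have := Nat.cast_ne_zero (R := K) |>.2 (2 * l).factorial_ne_zero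
    have := Nat.cast_ne_zero (R := K) |>.2 l.factorial_ne_zero
    simp [*]
  | succ m ih =>
    rw [ascPochhammer_succ_right, eval_mul, ih, eval_add, eval_X, eval_natCast,
      show 2 * (l + (m + 1)) = 2 * (l + m) + 1 + 1 by ring, ← add_assoc, Nat.factorial_succ,
      Nat.factorial_succ, Nat.factorial_succ (l + m)]
    have := Nat.cast_ne_zero (R := K) |>.2 (2 * l).factorial_ne_zero
    have := Nat.cast_ne_zero (R := K) |>.2 (l + m).factorial_ne_zero
    have : (l : K) + m + 1 ≠ 0 := by exact_mod_cast (l + m).succ_ne_zero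
    push_cast
    field_simp
    ring

theorem chebV_eq_sum (n : ℕ) :
    chebV n =
      ∑ l ∈ range (n + 1), C (2 ^ l * ((n + l).choose (2 * l) : ℝ)) * (X - 1) ^ l := by
  rw [chebV, jacobiP, mul_sum]
  refine sum_congr rfl fun l hl => ?_
  obtain ⟨m, rfl⟩ := Nat.exists_eq_add_of_le (mem_range_succ_iff.1 hl)
  rw [mul_pow, ← C_pow, ← mul_assoc, ← mul_assoc, ← C_mul, ← C_mul]
  congr 2
  rw [show ((l + m : ℕ) : ℝ) + -(1 / 2) + 1 / 2 + 1 = ((l + m : ℕ) : ℝ) + 1 by ring,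
    show -(1 / 2) + (l : ℝ) + 1 = l + 1 / 2 by ring, add_tsub_cancel_left,
    ascPochhammer_eval_natCast_add_one, ascPochhammer_eval_natCast_add_half,
    Nat.cast_choose ℝ (show 2 * l ≤ l + m + l by omega), show l + m + l - 2 * l = m by omega,
    Nat.cast_choose ℝ (show l + m ≤ 2 * (l + m) by omega),
    show 2 * (l + m) - (l + m) = l + m by omega,
    show (2 : ℝ) ^ (2 * (l + m)) = 2 ^ l * 2 ^ l * 4 ^ m by
      rw [show 2 * (l + m) = l + l + 2 * m by ring, pow_add, pow_add, pow_mul]; norm_num]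
  have := Nat.cast_ne_zero (R := ℝ) |>.2 (2 * (l + m)).factorial_ne_zero
  rw [one_div, inv_pow]
  field_simp

theorem chebV_comp_two_mul_X_sub_one {m N : ℕ} (h : m ≤ N) :
    (chebV m).comp (2 * X - 1) =
      ∑ l ∈ range (N + 1), C (4 ^ l * ((m + l).choose (2 * l) : ℝ)) * (X - 1) ^ l := by
  rw [chebV_eq_sum, Polynomial.sum_comp]
  refine sum_subset_zero_on_sdiff (range_subset_range.2 (by omega)) (fun l hl => ?_)
    (fun l _ => ?_)
  · rw [mem_sdiff, mem_range, mem_range] at hl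
    rw [Nat.choose_eq_zero_of_lt (by omega), Nat.cast_zero, mul_zero, C_0, zero_mul]
  · rw [mul_comp, C_comp, pow_comp, sub_comp, X_comp, one_comp,
      show (2 * X - 1 - 1 : ℝ[X]) = C 2 * (X - 1) by rw [C_ofNat]; ring, mul_pow, ← C_pow,
      ← mul_assoc, ← C_mul, show (4 : ℝ) ^ l = 2 ^ l * 2 ^ l by rw [← mul_pow]; norm_num]
    congr 2; ring

theorem sum_range_sum_range_sub_eq_sum_antidiagonal {M : Type*} [AddCommMonoid M] (k : ℕ)
    (F : ℕ → ℕ → M) :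
    ∑ v ∈ range (k + 1), ∑ l ∈ range (k - v + 1), F v l =
      ∑ j ∈ range (k + 1), ∑ p ∈ antidiagonal j, F p.1 p.2 := by
  calc ∑ v ∈ range (k + 1), ∑ l ∈ range (k - v + 1), F v l
      = ∑ v ∈ range (k + 1), ∑ l ∈ range (k + 1 - v), F v l :=
        sum_congr rfl fun v hv => by rw [Nat.sub_add_comm (mem_range_succ_iff.1 hv)]
    _ = ∑ j ∈ range (k + 1), ∑ v ∈ range (j + 1), F v (j - v) :=
        (sum_range_diag_flip _ _).symm
    _ = ∑ j ∈ range (k + 1), ∑ p ∈ antidiagonal j, F p.1 p.2 := by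
        simp only [Nat.sum_antidiagonal_eq_sum_range_succ_mk]

theorem sum_antidiagonal_neg_one_pow_div_factorial {K : Type*} [Field K] [CharZero K] (j : ℕ) :
    ∑ p ∈ antidiagonal j, (-1 : K) ^ p.2 / (p.1 ! * p.2 !) =
      if j = 0 then 1 else 0 := by
  have h : ∑ p ∈ antidiagonal j, (-1 : K) ^ p.2 / (p.1 ! * p.2 !) =
      (1 + -1) ^ j / j ! := by
    rw [(Commute.all _ _).add_pow', sum_div]
    refine sum_congr rfl fun p hp => ?_
    rw [HasAntidiagonal.mem_antidiagonal] at hp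
    rw [← hp, nsmul_eq_mul, Nat.cast_add_choose, one_pow, one_mul]
    have := Nat.cast_ne_zero (R := K) |>.2 (p.1 + p.2).factorial_ne_zero
    field_simp
  rw [h, add_neg_cancel]
  rcases j with _ | j <;> simp

theorem sum_range_sum_range_neg_one_pow_doubleFactorial (n k : ℕ) :
    ∑ v ∈ range (k + 1), ∑ l ∈ range (k - v + 1),
        (-1 : ℝ) ^ l * ((2 * (n - v - l) + 1)‼ : ℝ) /
          ((k - v - l)! * (2 * n - v - l - k + 1)! * v ! * l !) =
      (2 * n + 1)‼ / (k ! * (2 * n - k + 1)!) := by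
  set g : ℕ → ℝ := fun j => (2 * (n - j) + 1)‼ / ((k - j)! * (2 * n - j - k + 1)!)
  calc _ = ∑ j ∈ range (k + 1),
          (∑ p ∈ antidiagonal j, (-1 : ℝ) ^ p.2 / (p.1 ! * p.2 !)) * g j := by
        rw [sum_range_sum_range_sub_eq_sum_antidiagonal]
        refine sum_congr rfl fun j _ => ?_
        rw [sum_mul]
        refine sum_congr rfl fun p hp => ?_
        rw [HasAntidiagonal.mem_antidiagonal] at hp
        simp only [g, ← hp, Nat.sub_sub]
        field_simp
    _ = g 0 := by simp [sum_antidiagonal_neg_one_pow_div_factorial]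
    _ = _ := by simp [g]

theorem two_zpow_neg_mul_factorial_mul_doubleFactorial {n k : ℕ} (hk : k ≤ 2 * n) :
    (2 : ℝ) ^ (-(n : ℤ)) * n ! * ((2 * n + 1)‼ / (k ! * (2 * n - k + 1)!)) =
      (2 * n + 1).choose k / 4 ^ n := by
  rw [Nat.cast_choose ℝ (by omega : k ≤ 2 * n + 1), show 2 * n + 1 - k = 2 * n - k + 1 by omega,
    Nat.factorial_eq_mul_doubleFactorial (2 * n), Nat.doubleFactorial_two_mul, zpow_neg,
    zpow_natCast, show (4 : ℝ) ^ n = 2 ^ n * 2 ^ n by rw [← mul_pow]; norm_num]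
  push_cast
  field_simp

namespace PowerSeries

variable {S : Type*}

theorem coeff_one_add_X_pow [Semiring S] (a i : ℕ) :
    coeff i ((1 + X : S⟦X⟧) ^ a) = a.choose i := by
  rw [← Polynomial.coe_X, ← Polynomial.coe_one, ← Polynomial.coe_add, ← Polynomial.coe_pow,
    Polynomial.coeff_coe, Polynomial.coeff_one_add_X_pow]

theorem one_add_X_sq_mul_invOneSubPow [CommRing S] (d : ℕ) :
    (1 + X : S⟦X⟧) ^ 2 * (invOneSubPow S (d + 2)).val =
      (invOneSubPow S d).val + 4 * X * (invOneSubPow S (d + 2)).val := by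
  linear_combination one_sub_pow_mul_invOneSubPow_val_add_eq_invOneSubPow_val S d 2

theorem coeff_one_add_X_pow_mul_invOneSubPow [CommRing S] (l m : ℕ) :
    coeff m ((1 + X : S⟦X⟧) ^ (2 * l + 2 * m + 1) * (invOneSubPow S (2 * l + 1)).val) =
      4 ^ m * (l + m).choose l := by
  induction l generalizing m with
  | zero =>
    simp only [invOneSubPow_val_succ_eq_mk_add_choose, coeff_mul, coeff_mk,
      coeff_one_add_X_pow, Nat.sum_antidiagonal_eq_sum_range_succ_mk]
    simpa using congrArg (Nat.cast (R := S)) (Nat.sum_range_choose_halfway m)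
  | succ l ihl =>
    induction m with
    | zero => simp [coeff_zero_eq_constantCoeff_apply, invOneSubPow_val_succ_eq_mk_add_choose]
    | succ m ihm =>
      calc coeff (m + 1) ((1 + X : S⟦X⟧) ^ (2 * (l + 1) + 2 * (m + 1) + 1) *
              (invOneSubPow S (2 * (l + 1) + 1)).val)
          = coeff (m + 1) ((1 + X : S⟦X⟧) ^ (2 * l + 2 * (m + 1) + 1) *
              ((1 + X) ^ 2 * (invOneSubPow S (2 * l + 1 + 2)).val)) := by
            rw [show 2 * (l + 1) + 2 * (m + 1) + 1 = 2 * l + 2 * (m + 1) + 1 + 2 by ring,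
              show 2 * (l + 1) + 1 = 2 * l + 1 + 2 by ring, pow_add, mul_assoc]
        _ = coeff (m + 1) ((1 + X : S⟦X⟧) ^ (2 * l + 2 * (m + 1) + 1) *
              (invOneSubPow S (2 * l + 1)).val) +
              4 * coeff m ((1 + X : S⟦X⟧) ^ (2 * (l + 1) + 2 * m + 1) *
                (invOneSubPow S (2 * (l + 1) + 1)).val) := by
          rw [one_add_X_sq_mul_invOneSubPow, mul_add, map_add, mul_left_comm, mul_assoc,
            ← map_ofNat PowerSeries.C 4, coeff_C_mul, coeff_succ_X_mul,
            show 2 * (l + 1) + 2 * m + 1 = 2 * l + 2 * (m + 1) + 1 by ring,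
            show 2 * (l + 1) + 1 = 2 * l + 1 + 2 by ring]
        _ = 4 ^ (m + 1) * (l + 1 + (m + 1)).choose (l + 1) := by
          rw [ihl, ihm, show l + 1 + m = l + (m + 1) by ring,
            show l + 1 + (m + 1) = l + (m + 1) + 1 by ring, Nat.choose_succ_succ']
          push_cast
          ring

end PowerSeries

theorem sum_choose_mul_choose_eq_four_pow_mul_choose {S : Type*} [CommRing S] {n l : ℕ}
    (h : l ≤ n) :
    ∑ k ∈ range (n + 1), ((2 * n + 1).choose k : S) * (n - k + l).choose (2 * l) =
      4 ^ (n - l) * n.choose l := by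
  obtain ⟨m, rfl⟩ := Nat.exists_eq_add_of_le h
  have key := PowerSeries.coeff_one_add_X_pow_mul_invOneSubPow (S := S) l m
  simp only [PowerSeries.invOneSubPow_val_succ_eq_mk_add_choose, PowerSeries.coeff_mul,
    PowerSeries.coeff_mk, PowerSeries.coeff_one_add_X_pow,
    Nat.sum_antidiagonal_eq_sum_range_succ_mk] at key
  rw [show 2 * (l + m) + 1 = 2 * l + 2 * m + 1 by ring, add_tsub_cancel_left, ← key]
  refine (sum_subset_zero_on_sdiff (range_subset_range.2 (by omega)) (fun k hk => ?_)
    (fun k hk => ?_)).symm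
  · rw [mem_sdiff, mem_range, mem_range] at hk
    rw [Nat.choose_eq_zero_of_lt (n := l + m - k + l) (by omega), Nat.cast_zero, mul_zero]
  · rw [show l + m - k + l = 2 * l + (m - k) by grind]

theorem monomial_in_shifted_chebV (n : ℕ) :
    (X : ℝ[X]) ^ n =
      ∑ k ∈ range (n + 1),
        C ((2 : ℝ) ^ (-(n : ℤ)) * n.factorial *
           ∑ v ∈ range (k + 1), ∑ l ∈ range (k - v + 1),
             (-1 : ℝ) ^ l * (Nat.doubleFactorial (2 * (n - v - l) + 1) : ℝ) /
             ((k - v - l).factorial * (2 * n - v - l - k + 1).factorial *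
              v.factorial * l.factorial)) *
        (chebV (n - k)).comp (2 * X - 1) := by
  have hcoeff : ∀ l ∈ range (n + 1), ∑ k ∈ range (n + 1), 4 ^ l / 4 ^ n *
      ((2 * n + 1).choose k * ((n - k + l).choose (2 * l) : ℝ)) = n.choose l := by
    intro l hl
    have hln : l ≤ n := mem_range_succ_iff.1 hl
    rw [← mul_sum, sum_choose_mul_choose_eq_four_pow_mul_choose hln, ← mul_assoc,
      div_mul_eq_mul_div, ← pow_add, Nat.add_sub_cancel' hln, div_self (by positivity), one_mul]
  symm
  calc _ = ∑ k ∈ range (n + 1), ∑ l ∈ range (n + 1), C (4 ^ l / 4 ^ n *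
          ((2 * n + 1).choose k * ((n - k + l).choose (2 * l) : ℝ))) * (X - 1) ^ l :=
        sum_congr rfl fun k hk => by
          rw [sum_range_sum_range_neg_one_pow_doubleFactorial,
            two_zpow_neg_mul_factorial_mul_doubleFactorial (by grind),
            chebV_comp_two_mul_X_sub_one (n.sub_le k), mul_sum]
          exact sum_congr rfl fun l _ => by rw [← mul_assoc, ← C_mul]; congr 2; ring
    _ = ∑ l ∈ range (n + 1), C (n.choose l : ℝ) * (X - 1) ^ l := by
      rw [sum_comm]
      exact sum_congr rfl fun l hl => by rw [← sum_mul, ← map_sum, hcoeff l hl]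
    _ = (X - 1 + 1) ^ n := by
      rw [add_pow]
      exact sum_congr rfl fun l _ => by rw [one_pow, mul_one, mul_comm, C_eq_natCast]
    _ = X ^ n := by rw [sub_add_cancel]
end

section
/- For every natural number $n$, the identity of polynomials $x^n = \sum_{k=0}^{n} \Big( 2^{-n}\,(2(n-k)+1)\, n! \sum_{v=0}^{k} \sum_{l=0}^{k-v} \frac{(-1)^{l}\,(2(n-v-l)-1)!!}{(k-v-l)!\,(2n-v-l-k+1)!\; v!\; l!} \Big) W_{n-k}(2x-1)$ holds in $\mathbb{R}[x]$. -/
/-!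
Expanding the Jacobi form of `W_m` gives `W_m(x) = ∑ₗ (C(m+l+1, 2l+1) + C(m+l, 2l+1)) (2x - 2)^l`,
and Pascal's rule turns this into the recurrence `W_{m+2} = 2x W_{m+1} - W_m` with `W_0 = 1`,
`W_1 = 2x + 1`. Hence `2(x+1) W_{m+1} = W_{m+2} + 2 W_{m+1} + W_m` and `2(x+1) W_0 = W_1 + W_0`, and
induction on `n` gives `(2(x+1))^n = ∑ₘ (C(2n, n+m) - C(2n, n+m+1)) W_m`: the coefficients obey the
matching recurrence because `C(N+2, s+2) = C(N, s) + 2 C(N, s+1) + C(N, s+2)`. Substituting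
`x ↦ 2x - 1` expresses `(4x)^n` in the shifted basis. In the stated coefficient, grouping the double
sum by `j = v + l` produces the factor `∑_v (-1)^(j-v) / (v! (j-v)!) = (1 - 1)^j / j!`, so only
`v = l = 0` survives, and `(2n)! = 2^n n! (2n-1)‼` identifies what is left with the binomial
difference divided by `4^n`.
-/

open Polynomial Finset

open scoped Nat

theorem Nat.choose_add_two (N k : ℕ) :
    (N + 2).choose (k + 2) = N.choose k + 2 * N.choose (k + 1) + N.choose (k + 2) := by
  simp only [Nat.choose_succ_succ']
  ring

theorem Nat.choose_add_two_add_choose (N k : ℕ) :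
    (N + 2).choose (k + 2) + N.choose (k + 2) = N.choose k + 2 * (N + 1).choose (k + 2) := by
  simp only [Nat.choose_succ_succ']
  ring

theorem Nat.factorial_two_mul (n : ℕ) : (2 * n)! = 2 ^ n * n ! * (2 * n - 1)‼ := by
  cases n with
  | zero => rfl
  | succ n =>
    rw [show 2 * (n + 1) - 1 = 2 * n + 1 by omega, ← Nat.doubleFactorial_two_mul,
      show 2 * (n + 1) = 2 * n + 1 + 1 by ring, Nat.factorial_eq_mul_doubleFactorial]

lemma sum_neg_one_pow_div_factorial_mul_factorial (j : ℕ) :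
    ∑ v ∈ range (j + 1), (-1 : ℝ) ^ (j - v) / (v ! * (j - v)!) = if j = 0 then 1 else 0 := by
  have h := add_pow (1 : ℝ) (-1) j
  rw [add_neg_cancel] at h
  have h' : ∑ v ∈ range (j + 1), (-1 : ℝ) ^ (j - v) / (v ! * (j - v)!) = 0 ^ j / j ! := by
    rw [h, sum_div]
    refine sum_congr rfl fun v hv ↦ ?_
    rw [one_pow, one_mul, Nat.cast_choose ℝ (Nat.lt_succ_iff.mp (mem_range.mp hv))]
    field_simp
  rw [h']
  split_ifs with hj <;> simp [hj]

lemma ascPochhammer_eval_add_three_halves (l j : ℕ) :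
    4 ^ j * (l + j)! * (2 * l + 1)! * (ascPochhammer ℝ j).eval ((l : ℝ) + 3 / 2) =
      (2 * (l + j) + 1)! * l ! := by
  induction j with
  | zero => simp [mul_comm]
  | succ j ih =>
    rw [ascPochhammer_succ_eval, ← add_assoc,
      show 2 * (l + j + 1) + 1 = 2 * (l + j) + 1 + 1 + 1 by ring,
      Nat.factorial_succ (2 * (l + j) + 1 + 1), Nat.factorial_succ (2 * (l + j) + 1),
      Nat.factorial_succ (l + j)]
    push_cast
    linear_combination (2 * ((l : ℝ) + j) + 2) * (2 * (l + j) + 3) * ih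

def chebWCoeff (m l : ℕ) : ℕ := (m + l + 1).choose (2 * l + 1) + (m + l).choose (2 * l + 1)

lemma chebWCoeff_eq_zero {m l : ℕ} (h : m < l) : chebWCoeff m l = 0 := by
  simp [chebWCoeff, Nat.choose_eq_zero_of_lt, show m + l + 1 < 2 * l + 1 by omega,
    show m + l < 2 * l + 1 by omega]

lemma chebWCoeff_zero_right (m : ℕ) : chebWCoeff m 0 = 2 * m + 1 := by
  simp only [chebWCoeff, add_zero, mul_zero, zero_add, Nat.choose_one_right]
  ring

lemma chebWCoeff_add_two_succ (m l : ℕ) :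
    chebWCoeff (m + 2) (l + 1) + chebWCoeff m (l + 1) =
      chebWCoeff (m + 1) l + 2 * chebWCoeff (m + 1) (l + 1) := by
  have h₁ := Nat.choose_add_two_add_choose (m + l + 2) (2 * l + 1)
  have h₂ := Nat.choose_add_two_add_choose (m + l + 1) (2 * l + 1)
  simp only [chebWCoeff]
  ring_nf at h₁ h₂ ⊢
  omega

lemma chebWCoeff_mul_factorial (l j : ℕ) :
    chebWCoeff (l + j) l * ((2 * l + 1)! * j !) = (2 * (l + j) + 1) * (2 * l + j)! := by
  have h₁ := Nat.add_one_mul_choose_eq (2 * l + j) (2 * l)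
  have h₂ := Nat.choose_succ_right_eq (2 * l + j) (2 * l)
  have h₃ := Nat.choose_mul_factorial_mul_factorial (show 2 * l ≤ 2 * l + j by omega)
  rw [Nat.add_sub_cancel_left] at h₂ h₃
  rw [chebWCoeff, show l + j + l = 2 * l + j by ring, Nat.factorial_succ]
  linear_combination (2 * l)! * j ! * (h₂ - h₁) + (2 * (l + j) + 1) * h₃

noncomputable def chebWPoly (m : ℕ) : ℝ[X] := ∑ l ∈ range (m + 1), C (chebWCoeff m l : ℝ) * X ^ l

lemma coeff_chebWPoly (m l : ℕ) : (chebWPoly m).coeff l = chebWCoeff m l := by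
  rw [chebWPoly, finsetSum_coeff]
  simp only [coeff_C_mul_X_pow, sum_ite_eq, mem_range]
  split_ifs with h
  · rfl
  · rw [chebWCoeff_eq_zero (by omega), Nat.cast_zero]

lemma chebWPoly_add_two (m : ℕ) :
    chebWPoly (m + 2) = (X + 2) * chebWPoly (m + 1) - chebWPoly m := by
  ext (_ | l)
  · simp only [coeff_sub, mul_coeff_zero, coeff_add, coeff_X_zero, coeff_ofNat_zero, zero_add,
      coeff_chebWPoly, chebWCoeff_zero_right]
    push_cast
    ring
  · rw [coeff_sub, add_mul, coeff_add, coeff_X_mul, coeff_ofNat_mul, coeff_chebWPoly,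
      coeff_chebWPoly, coeff_chebWPoly, coeff_chebWPoly, eq_sub_iff_add_eq]
    exact_mod_cast chebWCoeff_add_two_succ m l

lemma chebW_jacobiP_coeff {m l : ℕ} (hl : l ≤ m) :
    2 ^ (2 * m) / ((2 * m).choose m : ℝ) *
        ((ascPochhammer ℝ l).eval ((m : ℝ) + 1 / 2 + -(1 / 2) + 1) *
          (ascPochhammer ℝ (m - l)).eval (1 / 2 + (l : ℝ) + 1) / (l ! * (m - l)!)) * (1 / 2) ^ l =
      chebWCoeff m l * 2 ^ l := by
  obtain ⟨j, rfl⟩ := Nat.exists_eq_add_of_le hl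
  have hP₁ : (ascPochhammer ℝ l).eval (((l + j : ℕ) : ℝ) + 1) = (l + j + l)! / (l + j)! := by
    rw [eq_div_iff (by positivity), mul_comm]
    exact_mod_cast factorial_mul_ascPochhammer ℝ (l + j) l
  have hP₂ : (ascPochhammer ℝ j).eval ((l : ℝ) + 3 / 2) =
      (2 * (l + j) + 1)! * l ! / (4 ^ j * (l + j)! * (2 * l + 1)!) := by
    rw [eq_div_iff (by positivity), mul_comm]
    exact ascPochhammer_eval_add_three_halves l j
  have hC : ((2 * (l + j)).choose (l + j) : ℝ) = (2 * (l + j))! / ((l + j)! * (l + j)!) := by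
    rw [Nat.cast_choose ℝ (by omega), show 2 * (l + j) - (l + j) = l + j by omega]
  have hW : (chebWCoeff (l + j) l : ℝ) =
      (2 * (l + j) + 1) * (2 * l + j)! / ((2 * l + 1)! * j !) := by
    rw [eq_div_iff (by positivity)]
    exact_mod_cast chebWCoeff_mul_factorial l j
  rw [Nat.add_sub_cancel_left,
    show ((l + j : ℕ) : ℝ) + 1 / 2 + -(1 / 2) + 1 = ((l + j : ℕ) : ℝ) + 1 by ring,
    show 1 / 2 + (l : ℝ) + 1 = l + 3 / 2 by ring, hP₁, hP₂, hC, hW,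
    show l + j + l = 2 * l + j by ring, Nat.factorial_succ (2 * (l + j)),
    show (4 : ℝ) ^ j = 2 ^ (2 * j) by rw [pow_mul]; norm_num, one_div_pow]
  field_simp
  push_cast
  ring

lemma chebW_eq_comp (m : ℕ) : chebW m = (chebWPoly m).comp (2 * X - 2) := by
  have h₂ : (2 * X - 2 : ℝ[X]) = C 2 * (X - 1) := by rw [map_ofNat C 2]; ring
  simp only [chebW, jacobiP, chebWPoly, mul_sum, Polynomial.sum_comp, mul_comp, C_comp, X_pow_comp,
    h₂, mul_pow, ← C_pow, ← mul_assoc, ← C_mul]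
  refine sum_congr rfl fun l hl ↦ ?_
  rw [chebW_jacobiP_coeff (Nat.lt_succ_iff.mp (mem_range.mp hl))]

lemma chebW_zero : chebW 0 = 1 := by
  simp [chebW_eq_comp, chebWPoly, chebWCoeff]

lemma chebW_one : chebW 1 = 2 * X + 1 := by
  simp [chebW_eq_comp, chebWPoly, chebWCoeff, sum_range_succ]
  ring

lemma chebW_add_two (m : ℕ) : chebW (m + 2) = 2 * X * chebW (m + 1) - chebW m := by
  simp only [chebW_eq_comp, chebWPoly_add_two, sub_comp, mul_comp, add_comp, X_comp, ofNat_comp]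
  ring

lemma two_mul_X_add_one_mul_chebW_zero : 2 * (X + 1) * chebW 0 = chebW 1 + chebW 0 := by
  rw [chebW_zero, chebW_one]
  ring

lemma two_mul_X_add_one_mul_chebW_succ (m : ℕ) :
    2 * (X + 1) * chebW (m + 1) = chebW (m + 2) + 2 * chebW (m + 1) + chebW m := by
  rw [chebW_add_two]
  ring

lemma two_mul_X_add_one_mul_sum_chebW (f : ℕ → ℝ) (N : ℕ) (hf₁ : f (N + 1) = 0)
    (hf₂ : f (N + 2) = 0) :
    2 * (X + 1) * ∑ m ∈ range (N + 1), C (f m) * chebW m =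
      C (f 0 + f 1) * chebW 0 +
        ∑ m ∈ range (N + 1), C (f m + 2 * f (m + 1) + f (m + 2)) * chebW (m + 1) := by
  -- Reindexing the sums only costs boundary terms: those at `0` match `C (f 0 + f 1) * chebW 0`,
  -- those at the top vanish by `hf₁`, `hf₂`.
  have hA := sum_range_succ' (fun m ↦ C (f m) * chebW (m + 1)) N
  have hB := sum_range_succ (fun m ↦ C (2 * f (m + 1)) * chebW (m + 1)) N
  have hD := sum_range_succ (fun m ↦ C (f (m + 2)) * chebW (m + 1)) N
  have hE₁ := sum_range_succ' (fun m ↦ C (f (m + 1)) * chebW m) N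
  have hE₂ := sum_range_succ (fun m ↦ C (f (m + 1)) * chebW m) N
  have hL (m : ℕ) : 2 * (X + 1) * (C (f (m + 1)) * chebW (m + 1)) =
      C (f (m + 1)) * chebW (m + 2) + C (2 * f (m + 1)) * chebW (m + 1) +
        C (f (m + 1)) * chebW m := by
    rw [C_mul, map_ofNat C 2]
    linear_combination C (f (m + 1)) * two_mul_X_add_one_mul_chebW_succ m
  rw [mul_sum, sum_range_succ', sum_congr rfl fun m _ ↦ hL m]
  simp only [C_add, add_mul, sum_add_distrib]
  simp only [hf₁, hf₂, mul_zero, C_0, zero_mul, add_zero, zero_add] at *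
  linear_combination hE₁ - hA - hB - hD - hE₂ + C (f 0) * two_mul_X_add_one_mul_chebW_zero

def binomDiff (n m : ℕ) : ℝ := ((2 * n).choose (n + m) : ℝ) - (2 * n).choose (n + m + 1)

lemma binomDiff_eq_zero {n m : ℕ} (h : n < m) : binomDiff n m = 0 := by
  simp [binomDiff, Nat.choose_eq_zero_of_lt, show 2 * n < n + m by omega,
    show 2 * n < n + m + 1 by omega]

lemma binomDiff_succ_zero (n : ℕ) : binomDiff (n + 1) 0 = binomDiff n 0 + binomDiff n 1 := by
  have h₁ := Nat.choose_succ_succ' (2 * n + 1) n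
  have h₂ := Nat.choose_succ_succ' (2 * n + 1) (n + 1)
  have h₃ := Nat.choose_succ_succ' (2 * n) n
  have h₄ := Nat.choose_succ_succ' (2 * n) (n + 1)
  have h₅ := Nat.choose_symm_half n
  simp only [binomDiff, show 2 * (n + 1) = 2 * n + 1 + 1 by ring, add_zero]
  rw [h₁, h₂, h₅, h₄, ← h₅, h₃]
  push_cast
  ring

lemma binomDiff_succ_succ (n j : ℕ) :
    binomDiff (n + 1) (j + 1) = binomDiff n j + 2 * binomDiff n (j + 1) + binomDiff n (j + 2) := by
  have h₁ := Nat.choose_add_two (2 * n) (n + j)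
  have h₂ := Nat.choose_add_two (2 * n) (n + j + 1)
  simp only [binomDiff]
  simp only [show 2 * (n + 1) = 2 * n + 2 by ring, show n + 1 + (j + 1) = n + j + 2 by ring,
    show n + j + 1 + 1 = n + j + 2 by ring, show n + (j + 1) = n + j + 1 by ring,
    show n + (j + 2) = n + j + 2 by ring] at h₂ ⊢
  rw [h₁, h₂]
  push_cast
  ring

lemma binomDiff_eq {n m : ℕ} (h : m ≤ n) :
    binomDiff n m = (2 * m + 1) * (2 * n)! / ((n - m)! * (n + m + 1)!) := by
  obtain ⟨d, rfl⟩ := Nat.exists_eq_add_of_le h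
  have h₁ := Nat.choose_mul_factorial_mul_factorial (show 2 * m + d ≤ 2 * (m + d) by omega)
  have h₂ := Nat.choose_succ_right_eq (2 * (m + d)) (2 * m + d)
  rw [show 2 * (m + d) - (2 * m + d) = d by omega] at h₁ h₂
  have h₁' : ((2 * (m + d)).choose (2 * m + d) : ℝ) * (2 * m + d)! * d ! = (2 * (m + d))! := by
    exact_mod_cast h₁
  have h₂' : ((2 * (m + d)).choose (2 * m + d + 1) : ℝ) * (2 * m + d + 1) =
      (2 * (m + d)).choose (2 * m + d) * d := by
    exact_mod_cast h₂
  rw [binomDiff, Nat.add_sub_cancel_left, show m + d + m = 2 * m + d by ring,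
    eq_div_iff (by positivity), Nat.factorial_succ]
  push_cast
  linear_combination (2 * m + d + 1 - d : ℝ) * h₁' - ((2 * m + d)! * d ! : ℝ) * h₂'

lemma two_mul_X_add_one_pow_eq_sum_chebW (n : ℕ) :
    (2 * (X + 1) : ℝ[X]) ^ n = ∑ m ∈ range (n + 1), C (binomDiff n m) * chebW m := by
  induction n with
  | zero => simp [binomDiff, chebW_zero]
  | succ n ih =>
    rw [pow_succ', ih, two_mul_X_add_one_mul_sum_chebW _ n (binomDiff_eq_zero (by omega))
      (binomDiff_eq_zero (by omega)), sum_range_succ' _ (n + 1), add_comm, binomDiff_succ_zero]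
    simp only [binomDiff_succ_succ]

lemma sum_sum_neg_one_pow_doubleFactorial (n k : ℕ) :
    ∑ v ∈ range (k + 1), ∑ l ∈ range (k - v + 1),
        (-1 : ℝ) ^ l * ((2 * (n - v - l) - 1)‼ : ℝ) /
          ((k - v - l)! * (2 * n - v - l - k + 1)! * v ! * l !) =
      (2 * n - 1)‼ / (k ! * (2 * n - k + 1)!) := by
  set f : ℕ → ℕ → ℝ := fun v l ↦ (-1 : ℝ) ^ l * ((2 * (n - v - l) - 1)‼ : ℝ) /
    ((k - v - l)! * (2 * n - v - l - k + 1)! * v ! * l !)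
  have hf {j v : ℕ} (hv : v ≤ j) : f v (j - v) =
      ((2 * (n - j) - 1)‼ : ℝ) / ((k - j)! * (2 * n - j - k + 1)!) *
        ((-1 : ℝ) ^ (j - v) / (v ! * (j - v)!)) := by
    simp only [f, Nat.sub_sub, Nat.add_sub_cancel' hv]
    field_simp
  calc ∑ v ∈ range (k + 1), ∑ l ∈ range (k - v + 1), f v l
      = ∑ v ∈ range (k + 1), ∑ l ∈ range (k + 1 - v), f v l :=
        sum_congr rfl fun v hv ↦ by rw [Nat.sub_add_comm (Nat.lt_succ_iff.mp (mem_range.mp hv))]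
    _ = ∑ j ∈ range (k + 1), ∑ v ∈ range (j + 1), f v (j - v) := (sum_range_diag_flip _ _).symm
    _ = ∑ j ∈ range (k + 1), ((2 * (n - j) - 1)‼ : ℝ) / ((k - j)! * (2 * n - j - k + 1)!) *
          if j = 0 then 1 else 0 := by
        refine sum_congr rfl fun j _ ↦ ?_
        rw [← sum_neg_one_pow_div_factorial_mul_factorial, mul_sum]
        exact sum_congr rfl fun v hv ↦ hf (Nat.lt_succ_iff.mp (mem_range.mp hv))
    _ = ((2 * n - 1)‼ : ℝ) / (k ! * (2 * n - k + 1)!) := by simp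

lemma monomial_chebW_coeff_eq {n k : ℕ} (hk : k ≤ n) :
    (2 : ℝ) ^ (-(n : ℤ)) * (2 * ((n : ℝ) - k) + 1) * n ! *
        ∑ v ∈ range (k + 1), ∑ l ∈ range (k - v + 1),
          (-1 : ℝ) ^ l * ((2 * (n - v - l) - 1)‼ : ℝ) /
            ((k - v - l)! * (2 * n - v - l - k + 1)! * v ! * l !) =
      ((4 : ℝ) ^ n)⁻¹ * binomDiff n (n - k) := by
  rw [sum_sum_neg_one_pow_doubleFactorial, binomDiff_eq (Nat.sub_le n k), Nat.sub_sub_self hk,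
    show n + (n - k) + 1 = 2 * n - k + 1 by omega, Nat.factorial_two_mul, Nat.cast_sub hk,
    zpow_neg, zpow_natCast, show (4 : ℝ) ^ n = 2 ^ n * 2 ^ n by rw [← mul_pow]; norm_num]
  push_cast
  field_simp

theorem monomial_in_shifted_chebW (n : ℕ) :
    (X : ℝ[X]) ^ n =
      ∑ k ∈ range (n + 1),
        C ((2 : ℝ) ^ (-(n : ℤ)) * (2 * ((n : ℝ) - k) + 1) * n.factorial *
           ∑ v ∈ range (k + 1), ∑ l ∈ range (k - v + 1),
             (-1 : ℝ) ^ l * (Nat.doubleFactorial (2 * (n - v - l) - 1) : ℝ) /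
             ((k - v - l).factorial * (2 * n - v - l - k + 1).factorial *
              v.factorial * l.factorial)) *
        (chebW (n - k)).comp (2 * X - 1) := by
  have hX : (X : ℝ[X]) ^ n = C ((4 : ℝ) ^ n)⁻¹ * ((2 * (X + 1)) ^ n).comp (2 * X - 1) := by
    simp only [pow_comp, mul_comp, add_comp, X_comp, one_comp, ofNat_comp, Nat.cast_ofNat]
    rw [show (2 * (2 * X - 1 + 1) : ℝ[X]) = C 4 * X by rw [map_ofNat C 4]; ring, mul_pow, ← C_pow,
      ← mul_assoc, ← C_mul, inv_mul_cancel₀ (by positivity), C_1, one_mul]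
  rw [hX, two_mul_X_add_one_pow_eq_sum_chebW, Polynomial.sum_comp, mul_sum, ← sum_range_reflect]
  refine sum_congr rfl fun k hk ↦ ?_
  rw [monomial_chebW_coeff_eq (Nat.lt_succ_iff.mp (mem_range.mp hk)), C_mul, mul_comp, C_comp,
    Nat.add_sub_cancel, mul_assoc]
end
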